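/- For every join-semilattice L, the space X_L, equipped with the support map l ↦ Supp(l) = {P ∈ X_L | l ∉ P}, is the universal support datum of L: it is a support datum, and for every support datum (Y, Supp_Y) of L there exists a unique map of support data X_L → Y. -/

import Mathlib

/-!
The points of `X_L` are the ind-objects `P` that have an immediate successor `P⁺`, the
intersection of all ind-objects strictly above `P`. By Zorn's lemma, an ind-object avoiding `l`
extends to a maximal one `P` avoiding `l`; then `l ∈ P⁺`, so `P ∈ X_L`. Hence the supports on
`X_L` detect every ind-object `T`: it is the set of `l` lying in all points `P ⊇ T` of `X_L`.

For a support datum `(Y, Supp_Y)`, injectivity separates `P` from `P⁺` by a point `y` of `Y`: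
`y` lies in no `Supp_Y(p)` with `p ∈ P` but in some `Supp_Y(p')` with `p' ∈ P⁺`. The ind-object
`{l | y ∉ Supp_Y(l)}` contains `P` and misses `p'`, so it cannot lie strictly above `P`; thus it
is `P`. Sending `P` to `y` is a map of support data, and it is the only one because in the T0
space `Y` a point is determined by the supports containing it.
-/

universe u

/-- An ind-object of a join-semilattice `L`: a nonempty, downward closed subset of `L`
closed under joins of two elements. -/
def IsIndObject {L : Type*} [SemilatticeSup L] (S : Set L) : Prop :=
  S.Nonempty ∧ (∀ ⦃l s : L⦄, l ≤ s → s ∈ S → l ∈ S) ∧ ∀ ⦃a b : L⦄, a ∈ S → b ∈ S → a ⊔ b ∈ S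

/-- `Ind(L)`, the set of ind-objects of `L`, partially ordered by inclusion. -/
abbrev IndObj (L : Type*) [SemilatticeSup L] := {S : Set L // IsIndObject S}

/-- The intersection of all ind-objects strictly containing `P`. -/
def indInterAbove {L : Type*} [SemilatticeSup L] (P : IndObj L) : Set L :=
  ⋂ (Q : IndObj L) (_ : P.1 ⊂ Q.1), Q.1

/-- `X_L`: the set of `P ∈ Ind(L)` such that the intersection of all ind-objects
strictly containing `P` strictly contains `P`. -/
abbrev XL (L : Type*) [SemilatticeSup L] := {P : IndObj L // P.1 ⊂ indInterAbove P}

/-- `Supp(l) = {P ∈ X_L | l ∉ P}` for `l ∈ L`. -/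
def ptSupp {L : Type*} [SemilatticeSup L] (l : L) : Set (XL L) :=
  {P : XL L | l ∉ P.1.1}

/-- The topology on `X_L` whose closed sets are generated by `{Supp(l) | l ∈ L}`. -/
instance XL.topologicalSpace (L : Type*) [SemilatticeSup L] : TopologicalSpace (XL L) :=
  .generateFrom {U : Set (XL L) | ∃ l : L, U = (ptSupp l)ᶜ}

open Set TopologicalSpace

lemma inseparable_iff_of_eq_generateFrom {Y ι : Type*} [t : TopologicalSpace Y] {s : ι → Set Y}
    (ht : t = generateFrom {U | ∃ i, U = (s i)ᶜ}) {x y : Y} :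
    Inseparable x y ↔ ∀ i, x ∈ s i ↔ y ∈ s i := by
  refine ⟨fun h i => not_iff_not.1 <| h.mem_open_iff (s := (s i)ᶜ) ?_, fun h => ?_⟩
  · rw [ht]
    exact isOpen_generateFrom_of_mem ⟨i, rfl⟩
  rw [inseparable_def, ht, nhds_generateFrom, nhds_generateFrom]
  congr! 3 with U
  constructor <;> rintro ⟨hU, i, rfl⟩ <;> exact ⟨by simpa [h i] using hU, i, rfl⟩

section

variable {L : Type*} [SemilatticeSup L]

lemma isIndObject_iff_isIdeal {S : Set L} : IsIndObject S ↔ Order.IsIdeal S :=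
  ⟨fun ⟨hne, hlow, hsup⟩ =>
    ⟨fun _ _ hab h => hlow hab h, hne, fun _ ha _ hb => ⟨_, hsup ha hb, le_sup_left, le_sup_right⟩⟩,
   fun h => ⟨h.Nonempty, fun _ _ hab h' => h.IsLowerSet hab h', fun _ _ ha hb =>
    h.toIdeal.sup_mem ha hb⟩⟩

lemma IsIndObject.sup_mem_iff {S : Set L} (h : IsIndObject S) {a b : L} :
    a ⊔ b ∈ S ↔ a ∈ S ∧ b ∈ S :=
  ⟨fun H => ⟨h.2.1 le_sup_left H, h.2.1 le_sup_right H⟩, fun ⟨ha, hb⟩ => h.2.2 ha hb⟩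

lemma subset_indInterAbove (P : IndObj L) : P.1 ⊆ indInterAbove P :=
  fun _ hx => mem_iInter₂.2 fun _ hQ => hQ.1 hx

lemma isIndObject_indInterAbove (P : IndObj L) : IsIndObject (indInterAbove P) :=
  ⟨P.2.1.mono (subset_indInterAbove P),
   fun _ _ hab hb => mem_iInter₂.2 fun Q _ => Q.2.2.1 hab (mem_iInter₂.1 hb Q ‹_›),
   fun _ _ ha hb => mem_iInter₂.2 fun Q hQ => Q.2.2.2 (mem_iInter₂.1 ha Q hQ) (mem_iInter₂.1 hb Q hQ)⟩

lemma ptSupp_sup (l l' : L) : ptSupp (l ⊔ l') = ptSupp l ∪ ptSupp l' := by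
  ext P
  exact (not_congr P.1.2.sup_mem_iff).trans not_and_or

lemma exists_maximal_isIndObject_notMem {T : Set L} (hT : IsIndObject T) {l : L} (hl : l ∉ T) :
    ∃ M, T ⊆ M ∧ Maximal (fun S => IsIndObject S ∧ l ∉ S) M := by
  refine zorn_subset_nonempty {S | IsIndObject S ∧ l ∉ S} (fun c hc hchain hne => ⟨⋃₀ c, ⟨?_, ?_⟩,
    fun _ => subset_sUnion_of_mem⟩) T ⟨hT, hl⟩
  · exact isIndObject_iff_isIdeal.2 <| Order.isIdeal_sUnion_of_isChain
      (fun S hS => isIndObject_iff_isIdeal.1 (hc hS).1) hchain hne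
  · rintro ⟨S, hS, hlS⟩
    exact (hc hS).2 hlS

lemma mem_indInterAbove_of_maximal {M : IndObj L} {l : L}
    (hM : Maximal (fun S => IsIndObject S ∧ l ∉ S) M.1) : l ∈ indInterAbove M :=
  mem_iInter₂.2 fun Q hQ => by_contra fun hlQ => hQ.2 (hM.2 ⟨Q.2, hlQ⟩ hQ.1)

lemma XL.exists_superset_notMem {T : Set L} (hT : IsIndObject T) {l : L} (hl : l ∉ T) :
    ∃ P : XL L, T ⊆ P.1.1 ∧ l ∉ P.1.1 := by
  obtain ⟨M, hTM, hM⟩ := exists_maximal_isIndObject_notMem hT hl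
  have hlM := mem_indInterAbove_of_maximal (M := ⟨M, hM.1.1⟩) hM
  exact ⟨⟨⟨M, hM.1.1⟩, subset_indInterAbove _, fun h => hM.1.2 (h hlM)⟩, hTM, hM.1.2⟩

lemma subset_of_iUnion_ptSupp_subset {S T : IndObj L}
    (h : (⋃ l ∈ S.1, ptSupp l) ⊆ ⋃ l ∈ T.1, ptSupp l) : S.1 ⊆ T.1 := by
  intro l hlS
  by_contra hlT
  obtain ⟨P, hTP, hlP⟩ := XL.exists_superset_notMem T.2 hlT
  obtain ⟨l', hl'T, hl'P⟩ := mem_iUnion₂.1 (h (mem_iUnion₂.2 ⟨l, hlS, hlP⟩))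
  exact hl'P (hTP hl'T)

lemma injective_iUnion_ptSupp : Function.Injective (fun S : IndObj L => ⋃ l ∈ S.1, ptSupp l) :=
  fun _ _ h => Subtype.ext <|
    (subset_of_iUnion_ptSupp_subset h.le).antisymm (subset_of_iUnion_ptSupp_subset h.ge)

instance XL.t0Space : T0Space (XL L) :=
  (t0Space_iff_inseparable _).2 fun _ _ h => Subtype.ext <| Subtype.ext <| Set.ext fun l =>
    not_iff_not.1 ((inseparable_iff_of_eq_generateFrom rfl).1 h l)

section SupportDatum

variable {Y : Type*} {sY : L → Set Y}

lemma isIndObject_setOf_notMem (hsup : ∀ l l' : L, sY (l ⊔ l') = sY l ∪ sY l') {y : Y}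
    (hy : ∃ l, y ∉ sY l) : IsIndObject {l | y ∉ sY l} := by
  refine ⟨hy, fun a b hab hb ha => hb ?_, fun a b ha hb h => ?_⟩
  · rw [← sup_eq_right.2 hab, hsup]
    exact Or.inl ha
  · rw [hsup] at h
    exact h.elim ha hb

lemma iUnion_ssubset_iUnion_of_ssubset
    (hinj : Function.Injective (fun S : IndObj L => ⋃ l ∈ S.1, sY l)) {S T : IndObj L}
    (hST : S.1 ⊂ T.1) : (⋃ l ∈ S.1, sY l) ⊂ ⋃ l ∈ T.1, sY l :=
  (biUnion_subset_biUnion_left hST.1).ssubset_of_ne fun h => hST.ne (congrArg Subtype.val (hinj h))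

lemma exists_forall_mem_iff_notMem (hsup : ∀ l l' : L, sY (l ⊔ l') = sY l ∪ sY l')
    (hinj : Function.Injective (fun S : IndObj L => ⋃ l ∈ S.1, sY l)) (P : XL L) :
    ∃ y, ∀ l, y ∈ sY l ↔ l ∉ P.1.1 := by
  obtain ⟨y, hyT, hyP⟩ := exists_of_ssubset <|
    iUnion_ssubset_iUnion_of_ssubset hinj (T := ⟨_, isIndObject_indInterAbove P.1⟩) P.2
  obtain ⟨l₁, hl₁, hyl₁⟩ := mem_iUnion₂.1 hyT
  have hPy : P.1.1 ⊆ {l | y ∉ sY l} := fun l hl hyl => hyP (mem_iUnion₂.2 ⟨l, hl, hyl⟩)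
  have hyP : {l | y ∉ sY l} ⊆ P.1.1 := by
    by_contra hnot
    have hind := isIndObject_setOf_notMem hsup (P.1.2.1.imp hPy)
    exact mem_iInter₂.1 hl₁ ⟨_, hind⟩ ⟨hPy, hnot⟩ hyl₁
  have hP : {l | y ∉ sY l} = P.1.1 := hyP.antisymm hPy
  exact ⟨y, fun l => by rw [← hP]; exact not_not.symm⟩

end SupportDatum

end

/-- `X_L`, with the support map `l ↦ Supp(l) = {P ∈ X_L | l ∉ P}`, is the universal
support datum of `L`: it is a support datum, and for every support datum `(Y, Supp_Y)`
of `L` there exists a unique map of support data `X_L → Y`. -/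
theorem stmt_7 (L : Type*) [SemilatticeSup L] :
    ((∀ l l' : L, ptSupp (l ⊔ l') = ptSupp l ∪ ptSupp l') ∧
      Function.Injective (fun S : IndObj L => ⋃ l ∈ S.1, ptSupp l) ∧
      T0Space (XL L) ∧
      XL.topologicalSpace L =
        TopologicalSpace.generateFrom {U : Set (XL L) | ∃ l : L, U = (ptSupp l)ᶜ}) ∧
    ∀ (Y : Type u) (tY : TopologicalSpace Y), @T0Space Y tY →
      ∀ sY : L → Set Y,
        (∀ l l' : L, sY (l ⊔ l') = sY l ∪ sY l') →
        Function.Injective (fun S : IndObj L => ⋃ l ∈ S.1, sY l) →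
        tY = TopologicalSpace.generateFrom {U : Set Y | ∃ l : L, U = (sY l)ᶜ} →
        ∃! f : XL L → Y,
          @Continuous (XL L) Y (XL.topologicalSpace L) tY f ∧
          ∀ l : L, f ⁻¹' sY l = ptSupp l := by
  refine ⟨⟨ptSupp_sup, injective_iUnion_ptSupp, inferInstance, rfl⟩, ?_⟩
  intro Y tY _ sY hsup hinj htY
  choose f hf using exists_forall_mem_iff_notMem hsup hinj
  have hpre : ∀ l, f ⁻¹' sY l = ptSupp l := fun l => Set.ext fun P => hf P l
  have hcont : Continuous f := by
    rw [htY, continuous_generateFrom_iff]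
    rintro _ ⟨l, rfl⟩
    rw [preimage_compl, hpre l]
    exact isOpen_generateFrom_of_mem ⟨l, rfl⟩
  refine ⟨f, ⟨hcont, hpre⟩, fun g ⟨_, hg⟩ => funext fun P => ?_⟩
  refine ((inseparable_iff_of_eq_generateFrom htY).2 fun l => ?_).eq
  rw [← mem_preimage, hg l, ← mem_preimage, hpre l]
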